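/- arXiv:1703.10816 — 2 statements merged into one kernel-verified Lean document; each statement's English description precedes it below -/
import Mathlib

section
/- Let G be a group acting irreducibly on a finite-dimensional real vector space W such that the image of G in GL(W) contains, in its closure up to positive scalars, a rank-one endomorphism (proximality). Then the commutant of G in End(W) is exactly the scalars ℝ·Id. -/
/-!
Commuting with `G` is a closed condition, so a `T` in the commutant also commutes with the
rank-one limit `π`. Then `T` preserves the line `range π`, hence has an eigenvalue `c`; the
eigenspace of `c` is a nonzero `G`-invariant subspace, so by irreducibility it is all of `W`.
-/

open Module

theorem commute_of_mem_closure {M : Type*} [Mul M] [TopologicalSpace M] [ContinuousMul M]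
    [T2Space M] {s : Set M} {a b : M} (h : ∀ x ∈ s, Commute a x) (hb : b ∈ closure s) :
    Commute a b := by
  have hs : s ⊆ Set.centralizer {a} := fun x hx ↦ by rintro _ rfl; exact (h x hx).eq
  exact closure_minimal hs (Set.isClosed_centralizer {a}) hb a rfl

theorem Submodule.map_eq_of_forall_map_le {R M : Type*} [Semiring R] [AddCommMonoid M]
    [Module R M] {G : Subgroup (M ≃ₗ[R] M)} {U : Submodule R M}
    (h : ∀ g ∈ G, U.map (g : M →ₗ[R] M) ≤ U) : ∀ g ∈ G, U.map (g : M →ₗ[R] M) = U := by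
  intro g hg
  exact (h g hg).antisymm fun x hx ↦ ⟨g.symm x, h g⁻¹ (G.inv_mem hg) ⟨x, hx, rfl⟩, by simp⟩

namespace Module.End

theorem exists_hasEigenvalue_of_commute_of_finrank_range_eq_one {K V : Type*} [Field K]
    [AddCommGroup V] [Module K V] {T π : End K V}
    (h : Commute T π) (hπ : finrank K (LinearMap.range π) = 1) : ∃ c, T.HasEigenvalue c := by
  obtain ⟨⟨v, u, rfl⟩, hv, hspan⟩ := finrank_eq_one_iff'.mp hπ
  obtain ⟨c, hc⟩ := hspan ⟨T (π u), T u, (LinearMap.congr_fun h u).symm⟩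
  refine ⟨c, hasEigenvalue_of_hasEigenvector (x := π u) ⟨mem_eigenspace_iff.mpr ?_, ?_⟩⟩
  · exact (congrArg Subtype.val hc).symm
  · exact fun h0 ↦ hv (Subtype.ext h0)

theorem eq_smul_one_of_forall_commute_of_hasEigenvalue {R M : Type*} [CommRing R]
    [AddCommGroup M] [Module R M] {G : Subgroup (M ≃ₗ[R] M)}
    (hirr : ∀ U : Submodule R M, (∀ g ∈ G, U.map (g : M →ₗ[R] M) = U) → U = ⊥ ∨ U = ⊤)
    {T : End R M} (hT : ∀ g ∈ G, Commute T g) {c : R} (hc : T.HasEigenvalue c) :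
    T = c • 1 := by
  have hinv : ∀ g ∈ G, (T.eigenspace c).map (g : M →ₗ[R] M) ≤ T.eigenspace c := fun g hg ↦
    Submodule.map_le_iff_le_comap.mpr (mapsTo_genEigenspace_of_comm (hT g hg) c 1)
  have htop : T.eigenspace c = ⊤ :=
    (hirr _ (Submodule.map_eq_of_forall_map_le hinv)).resolve_left hc
  ext x
  simpa using mem_eigenspace_iff.mp (htop ▸ Submodule.mem_top : x ∈ T.eigenspace c)

end Module.End

theorem commutant_eq_scalars_of_proximal_general
    {W : Type*} [NormedAddCommGroup W] [NormedSpace ℝ W] [FiniteDimensional ℝ W]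
    (G : Subgroup (W ≃ₗ[ℝ] W))
    -- irreducibility
    (hirr : ∀ U : Submodule ℝ W,
      (∀ g ∈ G, U.map (g : W →ₗ[ℝ] W) = U) → U = ⊥ ∨ U = ⊤)
    -- proximality: some rank-one endomorphism is a limit of positive multiples of
    -- elements of `G`
    (hprox : ∃ π : W →L[ℝ] W, Module.finrank ℝ (LinearMap.range (π : W →ₗ[ℝ] W)) = 1 ∧
      π ∈ closure {T : W →L[ℝ] W | ∃ g ∈ G, ∃ c : ℝ, 0 < c ∧
        T = c • LinearMap.toContinuousLinearMap (g : W →ₗ[ℝ] W)}) :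
    ∀ T : W →ₗ[ℝ] W, (∀ g ∈ G, T ∘ₗ (g : W →ₗ[ℝ] W) = (g : W →ₗ[ℝ] W) ∘ₗ T) →
      ∃ c : ℝ, T = c • LinearMap.id := by
  intro T hT
  obtain ⟨π, hrank, hclos⟩ := hprox
  let e := End.toContinuousLinearMap (𝕜 := ℝ) W
  have hTπ : Commute (e T) π := commute_of_mem_closure (fun _ ↦ by
    rintro ⟨g, hg, c, -, rfl⟩
    exact ((show Commute T g from hT g hg).map e).smul_right c) hclos
  obtain ⟨c, hc⟩ :=
    End.exists_hasEigenvalue_of_commute_of_finrank_range_eq_one (hTπ.map e.symm) hrank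
  exact ⟨c, End.eq_smul_one_of_forall_commute_of_hasEigenvalue hirr hT hc⟩

/-- If a group `G ⊆ GL(W)` acts irreducibly and proximally on a finite-dimensional real
vector space `W`, then the commutant of `G` in `End(W)` is exactly `ℝ·Id`. -/
theorem commutant_eq_scalars_of_proximal
    {W : Type*} [NormedAddCommGroup W] [NormedSpace ℝ W] [FiniteDimensional ℝ W]
    [Nontrivial W]
    (G : Subgroup (W ≃ₗ[ℝ] W))
    -- irreducibility
    (hirr : ∀ U : Submodule ℝ W,
      (∀ g ∈ G, U.map (g : W →ₗ[ℝ] W) = U) → U = ⊥ ∨ U = ⊤)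
    -- proximality: some rank-one endomorphism is a limit of positive multiples of
    -- elements of `G`
    (hprox : ∃ π : W →L[ℝ] W, Module.finrank ℝ (LinearMap.range (π : W →ₗ[ℝ] W)) = 1 ∧
      π ∈ closure {T : W →L[ℝ] W | ∃ g ∈ G, ∃ c : ℝ, 0 < c ∧
        T = c • LinearMap.toContinuousLinearMap (g : W →ₗ[ℝ] W)}) :
    ∀ T : W →ₗ[ℝ] W, (∀ g ∈ G, T ∘ₗ (g : W →ₗ[ℝ] W) = (g : W →ₗ[ℝ] W) ∘ₗ T) →
      ∃ c : ℝ, T = c • LinearMap.id :=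
  commutant_eq_scalars_of_proximal_general G hirr hprox
end

section
/- Let ν be a Borel probability measure on the projective space ℙ(V) of a finite-dimensional real vector space V, invariant in the stationary sense under a measure μ on a group G ⊆ GL(V) (μ * ν = ν). Suppose the only proper nonzero G-invariant subspace of V is W, that ν(ℙ(W)) = 0, that μ is supported on a subgroup whose action permutes finite G-invariant families of subspaces trivially (G Zariski connected and μ Zariski dense). Then for every proper subspace U of V, ν(ℙ(U)) = 0. -/
open MeasureTheory

variable {V : Type*} [NormedAddCommGroup V] [NormedSpace ℝ V]

noncomputable instance {V : Type*} [NormedAddCommGroup V] [NormedSpace ℝ V]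
    [MeasurableSpace V] : MeasurableSpace (Projectivization ℝ V) :=
  (inferInstance : MeasurableSpace {v : V // v ≠ 0}).map
    (Quotient.mk (projectivizationSetoid ℝ V))

/-!
Let `r` be the least dimension of a subspace `U` with `ν(ℙ(U)) > 0`. Two distinct `r`-dimensional
subspaces meet in a subspace of smaller dimension, so their projectivizations are `ν`-a.e.
disjoint; hence only finitely many of them have mass above any positive level, and the maximal
mass `α` among them is attained on a finite nonempty family `F`. Stationarity writes `ν(ℙ(U))` as
the `μ`-average of `ν(ℙ(g⁻¹U))`, so for `U ∈ F` almost every `g` keeps `g⁻¹U` in `F`: `μ`-a.e.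
`g` permutes `F`. Then every member of `F` is `G`-invariant, hence equal to `W`, which contradicts
`ν(ℙ(W)) = 0`.
-/

open ENNReal Set Module Function
open scoped LinearAlgebra.Projectivization

theorem exists_isMaxOn_of_setOf_le_finite {ι β : Type*} [LinearOrder β] {s : Set ι}
    {m : ι → β} {a : ι} (ha : a ∈ s) (hfin : {i | i ∈ s ∧ m a ≤ m i}.Finite) :
    ∃ i ∈ s, IsMaxOn m s i := by
  obtain ⟨i, ⟨his, hai⟩, hmax⟩ := hfin.exists_maximalFor m _ ⟨a, ha, le_rfl⟩
  refine ⟨i, his, fun j hj => ?_⟩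
  rcases le_total (m j) (m i) with h | h
  · exact h
  · exact hmax ⟨hj, hai.trans h⟩ h

namespace Submodule

theorem finrank_inf_lt_left_of_ne {K V : Type*} [DivisionRing K] [AddCommGroup V] [Module K V]
    [FiniteDimensional K V] {U₁ U₂ : Submodule K V} (h : finrank K U₁ = finrank K U₂)
    (hne : U₁ ≠ U₂) : finrank K ↥(U₁ ⊓ U₂) < finrank K U₁ :=
  finrank_lt_finrank_of_lt <| inf_lt_left.2 fun hle => hne (eq_of_le_of_finrank_eq hle h)

theorem image_map_eq_of_mapsTo_comap {K V : Type*} [Semiring K] [AddCommMonoid V] [Module K V]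
    (e : V ≃ₗ[K] V) {F : Set (Submodule K V)} (hF : F.Finite)
    (h : MapsTo (comap (e : V →ₗ[K] V)) F F) : map (e : V →ₗ[K] V) '' F = F := by
  have hbij : BijOn (comap (e : V →ₗ[K] V)) F F :=
    (hF.injOn_iff_bijOn_of_mapsTo h).1 (comap_injective_of_surjective e.surjective).injOn
  calc map (e : V →ₗ[K] V) '' F = map (e : V →ₗ[K] V) '' (comap (e : V →ₗ[K] V) '' F) := by
        rw [hbij.image_eq]
    _ = F := by simp only [image_image, map_comap_eq_of_surjective e.surjective, image_id']

end Submodule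

section Projective

variable {K V W : Type*} [DivisionRing K] [AddCommGroup V] [Module K V] [AddCommGroup W]
  [Module K W]

theorem Submodule.coe_projectivization (U : Submodule K V) :
    (U.projectivization : Set (ℙ K V)) = {x | x.submodule ≤ U} :=
  Set.ext U.mem_projectivization_iff_submodule_le

theorem Submodule.coe_projectivization_bot :
    ((⊥ : Submodule K V).projectivization : Set (ℙ K V)) = ∅ := by
  rw [OrderIso.map_bot, Projectivization.Subspace.bot_coe]

theorem Submodule.coe_projectivization_inf (U₁ U₂ : Submodule K V) :
    ((U₁ ⊓ U₂).projectivization : Set (ℙ K V)) =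
      (U₁.projectivization : Set (ℙ K V)) ∩ U₂.projectivization := by
  ext x
  simp only [SetLike.mem_coe, mem_inter_iff, mem_projectivization_iff_submodule_le, le_inf_iff]

theorem Projectivization.submodule_map (f : V →ₗ[K] W) (hf : Injective f) (x : ℙ K V) :
    (map f hf x).submodule = x.submodule.map f := by
  induction x using Projectivization.ind with
  | h v hv => rw [map_mk, submodule_mk, submodule_mk, Submodule.map_span, image_singleton]

theorem Submodule.preimage_projectivization_map (f : V →ₗ[K] W) (hf : Injective f)
    (U : Submodule K W) :
    Projectivization.map f hf ⁻¹' U.projectivization = (U.comap f).projectivization := by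
  ext x
  simp only [mem_preimage, SetLike.mem_coe, mem_projectivization_iff_submodule_le,
    Projectivization.submodule_map, map_le_iff_le_comap]

end Projective

section Measurable

variable {V W : Type*} [NormedAddCommGroup V] [NormedSpace ℝ V] [MeasurableSpace V]
  [FiniteDimensional ℝ V] [NormedAddCommGroup W] [NormedSpace ℝ W] [MeasurableSpace W]

-- The σ-algebra of `ℙ ℝ V` is the quotient one, so both proofs below work on `{v : V // v ≠ 0}`.
theorem Submodule.measurableSet_projectivization [OpensMeasurableSpace V] (U : Submodule ℝ V) :
    MeasurableSet (U.projectivization : Set (ℙ ℝ V)) :=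
  measurable_subtype_coe U.closed_of_finiteDimensional.measurableSet

theorem Projectivization.measurable_map [OpensMeasurableSpace V] [BorelSpace W] (f : V →ₗ[ℝ] W)
    (hf : Injective f) : Measurable (map f hf) := by
  intro s hs
  have hlift : Measurable fun v : {v : V // v ≠ 0} =>
      (⟨f v, fun h => v.2 (hf (h.trans f.map_zero.symm))⟩ : {w : W // w ≠ 0}) :=
    (f.continuous_of_finiteDimensional.measurable.comp measurable_subtype_coe).subtype_mk
  exact hlift hs

end Measurable

section Stationary

variable {G X : Type*} [MeasurableSpace G] [MeasurableSpace X] {μ : Measure G} {ν : Measure X}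

theorem MeasureTheory.Measure.aemeasurable_of_bind_eq {f : G → Measure X} [NeZero ν]
    (h : μ.bind f = ν) : AEMeasurable f μ := by
  by_contra hf
  rw [Measure.bind, Measure.map_of_not_aemeasurable hf, Measure.join_zero] at h
  exact NeZero.ne ν h.symm

theorem ae_measure_preimage_eq_of_bind_map_eq [IsProbabilityMeasure μ] [IsFiniteMeasure ν]
    [NeZero ν] {T : G → X → X} (hT : ∀ g, Measurable (T g))
    (hstat : μ.bind (fun g => ν.map (T g)) = ν) {s : Set X} (hs : MeasurableSet s)
    (hmax : ∀ g, ν (T g ⁻¹' s) ≤ ν s) : ∀ᵐ g ∂μ, ν (T g ⁻¹' s) = ν s := by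
  have hint : ∫⁻ g, ν (T g ⁻¹' s) ∂μ = ν s := by
    conv_rhs => rw [← hstat, Measure.bind_apply hs (Measure.aemeasurable_of_bind_eq hstat)]
    simp only [Measure.map_apply (hT _) hs]
  exact ae_eq_of_ae_le_of_lintegral_le (ae_of_all _ hmax) (hint ▸ measure_ne_top ν s)
    aemeasurable_const (by rw [lintegral_const, measure_univ, mul_one, hint])

end Stationary

section MassOfSubspaces

variable {V : Type*} [NormedAddCommGroup V] [NormedSpace ℝ V] [MeasurableSpace V]
  [OpensMeasurableSpace V] [FiniteDimensional ℝ V] (ν : Measure (ℙ ℝ V)) [IsFiniteMeasure ν]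

theorem finite_setOf_finrank_eq_le_measure_projectivization {r : ℕ}
    (hnull : ∀ U : Submodule ℝ V, finrank ℝ U < r → ν U.projectivization = 0)
    {ε : ℝ≥0∞} (hε : 0 < ε) :
    {U : Submodule ℝ V | finrank ℝ U = r ∧ ε ≤ ν U.projectivization}.Finite := by
  have hdisj : Pairwise (AEDisjoint ν on fun U : {U : Submodule ℝ V // finrank ℝ U = r} =>
      (U.1.projectivization : Set (ℙ ℝ V))) := by
    intro U₁ U₂ hne
    rw [onFun, AEDisjoint, ← Submodule.coe_projectivization_inf]
    have hlt := Submodule.finrank_inf_lt_left_of_ne (U₁.2.trans U₂.2.symm)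
      (Subtype.coe_injective.ne hne)
    exact hnull _ (hlt.trans_eq U₁.2)
  have hfin := ν.finite_const_le_meas_of_disjoint_iUnion₀ hε
    (fun U => U.1.measurableSet_projectivization.nullMeasurableSet) hdisj (measure_ne_top ν _)
  convert hfin.image Subtype.val using 1
  ext U
  simp [and_comm]

theorem exists_isMaxOn_measure_projectivization {U : Submodule ℝ V}
    (hU : ν U.projectivization ≠ 0) :
    ∃ U₀ : Submodule ℝ V, finrank ℝ U₀ ≤ finrank ℝ U ∧ ν U₀.projectivization ≠ 0 ∧
      IsMaxOn (fun U' : Submodule ℝ V => ν U'.projectivization)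
        {U' | finrank ℝ U' = finrank ℝ U₀} U₀ ∧
      {U' : Submodule ℝ V | finrank ℝ U' = finrank ℝ U₀ ∧
        ν U'.projectivization = ν U₀.projectivization}.Finite := by
  classical
  have hex : ∃ r, ∃ U' : Submodule ℝ V, finrank ℝ U' = r ∧ ν U'.projectivization ≠ 0 :=
    ⟨_, U, rfl, hU⟩
  obtain ⟨U₁, hU₁r, hU₁⟩ := Nat.find_spec hex
  have hnull : ∀ U' : Submodule ℝ V, finrank ℝ U' < Nat.find hex → ν U'.projectivization = 0 :=
    fun U' hU' => not_not.1 fun h => Nat.find_min hex hU' ⟨U', rfl, h⟩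
  have hfin := finite_setOf_finrank_eq_le_measure_projectivization ν hnull (pos_iff_ne_zero.2 hU₁)
  obtain ⟨U₀, hU₀r, hmax⟩ := exists_isMaxOn_of_setOf_le_finite
    (s := {U' : Submodule ℝ V | finrank ℝ U' = Nat.find hex})
    (m := fun U' : Submodule ℝ V => ν U'.projectivization) hU₁r hfin
  have hU₁U₀ : ν U₁.projectivization ≤ ν U₀.projectivization := hmax hU₁r
  refine ⟨U₀, hU₀r ▸ Nat.find_min' hex ⟨U, rfl, hU⟩, ?_, hU₀r ▸ hmax, ?_⟩
  · exact ((pos_iff_ne_zero.2 hU₁).trans_le hU₁U₀).ne'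
  · exact hfin.subset fun U' hU' => ⟨hU'.1.trans hU₀r, hU₁U₀.trans hU'.2.ge⟩

end MassOfSubspaces

theorem ae_mapsTo_comap_of_stationary {V G : Type*} [NormedAddCommGroup V] [NormedSpace ℝ V]
    [MeasurableSpace V] [BorelSpace V] [FiniteDimensional ℝ V] [MeasurableSpace G]
    {μ : Measure G} [IsProbabilityMeasure μ] {ν : Measure (ℙ ℝ V)} [IsFiniteMeasure ν]
    [NeZero ν] {ρ : G → V ≃ₗ[ℝ] V}
    (hstat : μ.bind (fun g => ν.map (Projectivization.map (ρ g : V →ₗ[ℝ] V) (ρ g).injective)) = ν)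
    {r : ℕ} {α : ℝ≥0∞} (hmax : ∀ U : Submodule ℝ V, finrank ℝ U = r → ν U.projectivization ≤ α)
    (hfin : {U : Submodule ℝ V | finrank ℝ U = r ∧ ν U.projectivization = α}.Finite) :
    ∀ᵐ g ∂μ, MapsTo (Submodule.comap (ρ g : V →ₗ[ℝ] V))
      {U | finrank ℝ U = r ∧ ν U.projectivization = α}
      {U | finrank ℝ U = r ∧ ν U.projectivization = α} := by
  refine (ae_ball_iff hfin.countable).2 fun U ⟨hUr, hUα⟩ => ?_
  have hrank : ∀ g, finrank ℝ (U.comap (ρ g : V →ₗ[ℝ] V)) = r := fun g => by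
    rw [Submodule.comap_equiv_eq_map_symm, LinearEquiv.finrank_map_eq, hUr]
  have hpre := fun g => Submodule.preimage_projectivization_map (ρ g : V →ₗ[ℝ] V) (ρ g).injective U
  filter_upwards [ae_measure_preimage_eq_of_bind_map_eq
    (fun g => Projectivization.measurable_map _ _) hstat U.measurableSet_projectivization
    fun g => by rw [hpre, hUα]; exact hmax _ (hrank g)] with g hg
  rw [hpre, hUα] at hg
  exact ⟨hrank g, hg⟩

/-- A stationary measure on `ℙ(V)` giving zero mass to `ℙ(W)`, where `W` is the
unique proper nonzero invariant subspace and finite invariant families of subspaces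
are fixed elementwise, gives zero mass to `ℙ(U)` for every proper subspace `U`. -/
theorem stationary_measure_null_on_proper_subspaces
    {V : Type*} [NormedAddCommGroup V] [NormedSpace ℝ V] [FiniteDimensional ℝ V]
    [MeasurableSpace V] [BorelSpace V]
    {G : Type*} [Group G] [MeasurableSpace G]
    (ρ : G →* (V ≃ₗ[ℝ] V))
    (μ : Measure G) [IsProbabilityMeasure μ]
    (ν : Measure (Projectivization ℝ V)) [IsProbabilityMeasure ν]
    -- `ν` is `μ`-stationary
    (hstat : μ.bind (fun g => ν.map
      (Projectivization.map ((ρ g : V ≃ₗ[ℝ] V) : V →ₗ[ℝ] V) (ρ g).injective)) = ν)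
    -- the only proper nonzero `G`-invariant subspace of `V` is `W`
    (W : Submodule ℝ V)
    (honly : ∀ U : Submodule ℝ V, U ≠ ⊥ → U ≠ ⊤ →
      (∀ g : G, U.map ((ρ g : V ≃ₗ[ℝ] V) : V →ₗ[ℝ] V) = U) → U = W)
    -- `ν(ℙ(W)) = 0`
    (hW : ν {x : Projectivization ℝ V | x.submodule ≤ W} = 0)
    -- consequence of Zariski connectedness of `G` and Zariski density of `μ`:
    -- any finite family of subspaces permuted by `μ`-a.e. `g` is fixed elementwise
    -- by all of `G`
    (hperm : ∀ F : Set (Submodule ℝ V), F.Finite → F.Nonempty →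
      (∀ᵐ g ∂μ, (fun U : Submodule ℝ V =>
          U.map ((ρ g : V ≃ₗ[ℝ] V) : V →ₗ[ℝ] V)) '' F = F) →
      ∀ U ∈ F, ∀ g : G, U.map ((ρ g : V ≃ₗ[ℝ] V) : V →ₗ[ℝ] V) = U) :
    ∀ U : Submodule ℝ V, U ≠ ⊤ →
      ν {x : Projectivization ℝ V | x.submodule ≤ U} = 0 := by
  intro U hU
  by_contra hUν
  rw [← Submodule.coe_projectivization] at hW hUν
  obtain ⟨U₀, hrank, hU₀ν, hmax, hfin⟩ := exists_isMaxOn_measure_projectivization ν hUν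
  have hpermuted := ae_mapsTo_comap_of_stationary (ρ := ρ) hstat (fun U' hU' => hmax hU') hfin
  have hinv := hperm _ hfin ⟨U₀, rfl, rfl⟩
    (hpermuted.mono fun g hg => Submodule.image_map_eq_of_mapsTo_comap (ρ g) hfin hg) U₀ ⟨rfl, rfl⟩
  have hU₀bot : U₀ ≠ ⊥ := by
    rintro rfl
    exact hU₀ν (by rw [Submodule.coe_projectivization_bot, measure_empty])
  have hU₀top : U₀ ≠ ⊤ := by
    rintro rfl
    exact (hrank.trans_lt (Submodule.finrank_lt hU)).ne (finrank_top ℝ V)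
  exact hU₀ν (honly U₀ hU₀bot hU₀top hinv ▸ hW)
end
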